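/- arXiv:1511.02562 — 2 statements merged into one kernel-verified Lean document; each statement's English description precedes it below -/
import Mathlib

section
/- Let a < 0 and b ≤ 0 be real numbers. Then ∫_0^∞ t^{−1/2}·exp(a·t + b/t) dt = √(π/(−a))·exp(−2·√(a·b)). (Note a·b ≥ 0; this is the key integral identity, Eqs. (14)–(16), underlying the proof of Theorem 2.) -/
open Real MeasureTheory

open Set

-- Glasser's lemma: for α > 0, c > 0,
-- ∫_{0}^∞ exp (-(α (x - c/x)^2)) dx = √(π/α)/2
lemma glasser (α c : ℝ) (hα : 0 < α) (hc : 0 < c) :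
    ∫ x in Ioi (0:ℝ), Real.exp (-(α * (x - c / x) ^ 2)) = Real.sqrt (π / α) / 2 := by
  set φ : ℝ → ℝ := fun x => x - c / x with hφ
  set G : ℝ → ℝ := fun u => Real.exp (-(α * u ^ 2)) with hG
  have hderiv : ∀ x ∈ Ioi (0:ℝ), HasDerivWithinAt φ (1 + c / x ^ 2) (Ioi 0) x := by
    intro x hx
    have hx0 : x ≠ 0 := ne_of_gt hx
    have h1 : HasDerivAt (fun x : ℝ => c / x) (-(c / x ^ 2)) x := by
      simpa [div_eq_mul_inv, mul_comm] using (hasDerivAt_inv hx0).const_mul c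
    have : HasDerivAt φ (1 - -(c / x ^ 2)) x := (hasDerivAt_id x).sub h1
    simpa using this.hasDerivWithinAt
  have hinj : InjOn φ (Ioi 0) := by
    apply StrictMonoOn.injOn
    intro x hx y hy hxy
    have h1 : c / y < c / x := div_lt_div_of_pos_left hc hx hxy
    show x - c / x < y - c / y
    linarith
  have himage : φ '' (Ioi 0) = univ := by
    apply eq_univ_of_forall
    intro u
    set s := Real.sqrt (u ^ 2 + 4 * c) with hs
    have hs2 : s ^ 2 = u ^ 2 + 4 * c := Real.sq_sqrt (by positivity)
    have hsu : |u| < s := by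
      have : |u| = Real.sqrt (u ^ 2) := (Real.sqrt_sq_eq_abs u).symm
      rw [this, hs]
      exact Real.sqrt_lt_sqrt (by positivity) (by linarith)
    have hxpos : 0 < (u + s) / 2 := by
      have := neg_abs_le u
      have := abs_nonneg u
      linarith [neg_lt_of_abs_lt hsu]
    refine ⟨(u + s) / 2, hxpos, ?_⟩
    have hx0 : ((u + s) / 2) ≠ 0 := ne_of_gt hxpos
    have hus : u + s ≠ 0 := by intro h; rw [h] at hxpos; simp at hxpos
    show (u + s) / 2 - c / ((u + s) / 2) = u
    field_simp
    nlinarith [hs2]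
  have hGint : IntegrableOn G univ := by
    rw [integrableOn_univ]
    simpa [hG, neg_mul] using integrable_exp_neg_mul_sq hα
  have key := integral_image_eq_integral_abs_deriv_smul measurableSet_Ioi hderiv hinj G
  rw [himage] at key
  -- key : ∫ x in univ, G x = ∫ x in Ioi 0, |1 + c/x^2| • G (φ x)
  have hGuniv : ∫ x in univ, G x = Real.sqrt (π / α) := by
    rw [Measure.restrict_univ]
    simpa [hG, neg_mul] using integral_gaussian α
  -- rewrite |1 + c/x^2| on Ioi 0
  have key2 : ∫ x in Ioi (0:ℝ), (1 + c / x ^ 2) * G (φ x) = Real.sqrt (π / α) := by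
    rw [← hGuniv, key]
    apply setIntegral_congr_fun measurableSet_Ioi
    intro x hx
    have hx' : (0:ℝ) < x := hx
    have h1 : (0:ℝ) < 1 + c / x ^ 2 := by positivity
    simp [abs_of_pos h1, smul_eq_mul]
  have hInt1 : IntegrableOn (fun x => |1 + c / x ^ 2| • G (φ x)) (Ioi 0) :=
    (integrableOn_image_iff_integrableOn_abs_deriv_smul measurableSet_Ioi hderiv hinj G).mp
      (by rw [himage]; exact hGint)
  have hInt1' : IntegrableOn (fun x => (1 + c / x ^ 2) * G (φ x)) (Ioi 0) := by
    apply hInt1.congr_fun _ measurableSet_Ioi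
    intro x hx
    have hx' : (0:ℝ) < x := hx
    have h1 : (0:ℝ) < 1 + c / x ^ 2 := by positivity
    simp [abs_of_pos h1, smul_eq_mul]
  have hGφmeas : AEStronglyMeasurable (fun x => G (φ x)) (volume.restrict (Ioi 0)) := by
    apply ContinuousOn.aestronglyMeasurable _ measurableSet_Ioi
    apply Continuous.comp_continuousOn (by continuity : Continuous G)
    exact (continuousOn_id.sub ((continuousOn_const).div continuousOn_id
      (fun x hx => ne_of_gt hx)))
  have hIntE : IntegrableOn (fun x => G (φ x)) (Ioi 0) := by
    apply Integrable.mono' hInt1' hGφmeas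
    filter_upwards [ae_restrict_mem measurableSet_Ioi] with x hx
    have hx' : (0:ℝ) < x := hx
    have hGpos : 0 < G (φ x) := Real.exp_pos _
    have h1 : (0:ℝ) ≤ c / x ^ 2 := by positivity
    rw [Real.norm_eq_abs, abs_of_pos hGpos]
    nlinarith
  have hIntC : IntegrableOn (fun x => (c / x ^ 2) * G (φ x)) (Ioi 0) := by
    have h2 : IntegrableOn (fun x => (1 + c / x ^ 2) * G (φ x) - G (φ x)) (Ioi 0) :=
      hInt1'.sub hIntE
    apply h2.congr_fun _ measurableSet_Ioi
    intro x hx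
    ring
  -- symmetry step: ∫ G∘φ = ∫ (c/x^2) G∘φ
  have hψderiv : ∀ x ∈ Ioi (0:ℝ), HasDerivWithinAt (fun x : ℝ => c / x) (-(c / x ^ 2)) (Ioi 0) x := by
    intro x hx
    have hx0 : x ≠ 0 := ne_of_gt hx
    have h1 : HasDerivAt (fun x : ℝ => c / x) (-(c / x ^ 2)) x := by
      simpa [div_eq_mul_inv, mul_comm] using (hasDerivAt_inv hx0).const_mul c
    exact h1.hasDerivWithinAt
  have hψinj : InjOn (fun x : ℝ => c / x) (Ioi 0) := by
    intro x hx y hy hxy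
    have hx0 : x ≠ 0 := ne_of_gt hx
    have hy0 : y ≠ 0 := ne_of_gt hy
    field_simp at hxy
    linarith
  have hψimage : (fun x : ℝ => c / x) '' (Ioi 0) = Ioi 0 := by
    ext u
    constructor
    · rintro ⟨x, hx, rfl⟩
      exact div_pos hc hx
    · intro hu
      exact ⟨c / u, div_pos hc hu, by field_simp⟩
  have sym : ∫ x in Ioi (0:ℝ), G (φ x) = ∫ x in Ioi (0:ℝ), |(-(c / x ^ 2))| • G (φ (c / x)) := by
    rw [← integral_image_eq_integral_abs_deriv_smul measurableSet_Ioi hψderiv hψinj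
      (fun u => G (φ u)), hψimage]
  have sym2 : ∫ x in Ioi (0:ℝ), G (φ x) = ∫ x in Ioi (0:ℝ), (c / x ^ 2) * G (φ x) := by
    rw [sym]
    apply setIntegral_congr_fun measurableSet_Ioi
    intro x hx
    have hx' : (0:ℝ) < x := hx
    have hx0 : x ≠ 0 := ne_of_gt hx'
    have h1 : (0:ℝ) < c / x ^ 2 := by positivity
    have hφeq : (φ (c / x)) ^ 2 = (φ x) ^ 2 := by
      simp only [hφ]
      have : c / (c / x) = x := by field_simp
      rw [this]; ring
    simp only [hG, abs_neg, abs_of_pos h1, smul_eq_mul, hφeq]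
  -- combine
  have split : ∫ x in Ioi (0:ℝ), (1 + c / x ^ 2) * G (φ x)
      = (∫ x in Ioi (0:ℝ), G (φ x)) + ∫ x in Ioi (0:ℝ), (c / x ^ 2) * G (φ x) := by
    rw [← integral_add hIntE hIntC]
    apply setIntegral_congr_fun measurableSet_Ioi
    intro x hx
    ring
  have : (2:ℝ) * ∫ x in Ioi (0:ℝ), G (φ x) = Real.sqrt (π / α) := by
    rw [← key2, split, ← sym2]; ring
  have hfinal : ∫ x in Ioi (0:ℝ), G (φ x) = Real.sqrt (π / α) / 2 := by linarith
  simpa [hG, hφ] using hfinal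

/-- For real `a < 0` and `b ≤ 0` (so that `a·b ≥ 0`),
`∫_0^∞ t^(-1/2) · exp (a·t + b/t) dt = √(π/(-a))·exp (-2·√(a·b))`. -/
theorem stmt_7 (a b : ℝ) (ha : a < 0) (hb : b ≤ 0) :
    ∫ t in Set.Ioi (0 : ℝ), t ^ (-(1 / 2) : ℝ) * Real.exp (a * t + b / t) =
      Real.sqrt (Real.pi / (-a)) * Real.exp (-2 * Real.sqrt (a * b)) := by
  have hα : (0:ℝ) < -a := by linarith
  set g : ℝ → ℝ := fun t => t ^ (-(1 / 2) : ℝ) * Real.exp (a * t + b / t) with hg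
  -- substitution t = x^2
  have hfderiv : ∀ x ∈ Ioi (0:ℝ), HasDerivWithinAt (fun x : ℝ => x ^ 2) (2 * x) (Ioi 0) x := by
    intro x hx
    simpa [mul_comm] using (hasDerivAt_pow 2 x).hasDerivWithinAt
  have hfinj : InjOn (fun x : ℝ => x ^ 2) (Ioi 0) := by
    intro x hx y hy hxy
    have hx' : (0:ℝ) < x := hx
    have hy' : (0:ℝ) < y := hy
    simp only at hxy
    nlinarith
  have hfimage : (fun x : ℝ => x ^ 2) '' (Ioi 0) = Ioi 0 := by
    ext u
    constructor
    · rintro ⟨x, hx, rfl⟩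
      have hx' : (0:ℝ) < x := hx
      show (0:ℝ) < x ^ 2
      positivity
    · intro hu
      exact ⟨Real.sqrt u, Real.sqrt_pos.mpr hu, Real.sq_sqrt (le_of_lt hu)⟩
  have step1 : ∫ t in Ioi (0:ℝ), g t = ∫ x in Ioi (0:ℝ), |2 * x| • g (x ^ 2) := by
    rw [← integral_image_eq_integral_abs_deriv_smul measurableSet_Ioi hfderiv hfinj g, hfimage]
  have step2 : ∫ x in Ioi (0:ℝ), |2 * x| • g (x ^ 2)
      = ∫ x in Ioi (0:ℝ), 2 * Real.exp (a * x ^ 2 + b / x ^ 2) := by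
    apply setIntegral_congr_fun measurableSet_Ioi
    intro x hx
    have hx' : (0:ℝ) < x := hx
    have hx0 : x ≠ 0 := ne_of_gt hx'
    have hrw : ((x:ℝ) ^ 2) ^ (-(1 / 2) : ℝ) = x⁻¹ := by
      rw [← Real.rpow_natCast x 2, ← Real.rpow_mul hx'.le]
      norm_num [Real.rpow_neg_one]
    simp only [hg, smul_eq_mul, hrw, abs_of_pos (by positivity : (0:ℝ) < 2 * x)]
    field_simp
  rw [show (∫ t in Set.Ioi (0:ℝ), t ^ (-(1 / 2) : ℝ) * Real.exp (a * t + b / t)) = ∫ t in Ioi (0:ℝ), g t from rfl, step1, step2]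
  rcases eq_or_lt_of_le hb with rfl | hb'
  · -- b = 0
    have h0 : ∫ x in Ioi (0:ℝ), 2 * Real.exp (a * x ^ 2 + 0 / x ^ 2)
        = 2 * ∫ x in Ioi (0:ℝ), Real.exp (-(-a) * x ^ 2) := by
      rw [← integral_const_mul]
      apply setIntegral_congr_fun measurableSet_Ioi
      intro x hx
      show 2 * Real.exp (a * x ^ 2 + 0 / x ^ 2) = 2 * Real.exp (- -a * x ^ 2)
      norm_num
    rw [h0, integral_gaussian_Ioi (-a)]
    simp
    ring
  · -- b < 0
    set c := Real.sqrt (b / a) with hcdef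
    have hba : 0 < b / a := div_pos_of_neg_of_neg hb' ha
    have hc : 0 < c := Real.sqrt_pos.mpr hba
    have hc2 : c ^ 2 = b / a := Real.sq_sqrt hba.le
    have hkey : Real.sqrt (a * b) = -a * c := by
      have ha0 : a ≠ 0 := ne_of_lt ha
      have h1 : a * b = a ^ 2 * (b / a) := by
        field_simp
      rw [h1, Real.sqrt_mul (by positivity) (b / a), Real.sqrt_sq_eq_abs,
        abs_of_neg ha, ← hcdef]
    have hident : ∀ x ∈ Ioi (0:ℝ), a * x ^ 2 + b / x ^ 2
        = -((-a) * (x - c / x) ^ 2) + (-2 * Real.sqrt (a * b)) := by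
      intro x hx
      have hx' : (0:ℝ) < x := hx
      have hx0 : x ≠ 0 := ne_of_gt hx'
      have ha0 : a ≠ 0 := ne_of_lt ha
      have hac2 : a * c ^ 2 = b := by
        rw [hc2]; field_simp
      rw [hkey]
      field_simp
      nlinarith [hac2]
    have hstep : ∫ x in Ioi (0:ℝ), 2 * Real.exp (a * x ^ 2 + b / x ^ 2)
        = (2 * Real.exp (-2 * Real.sqrt (a * b))) *
          ∫ x in Ioi (0:ℝ), Real.exp (-((-a) * (x - c / x) ^ 2)) := by
      rw [← integral_const_mul]
      apply setIntegral_congr_fun measurableSet_Ioi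
      intro x hx
      show 2 * Real.exp (a * x ^ 2 + b / x ^ 2) = _
      rw [hident x hx, Real.exp_add]
      ring
    rw [hstep, glasser (-a) c hα hc]
    ring
end

section
/- Let τ ≥ 0, δ > 0, λ > 0 be real numbers and let N ≥ 1 be a real number. Then ∫_0^∞ λ·exp(−λt)·(1/(N·δ·√(2πt)))·exp(−(ln N − τt)²/(2δ²t)) dt = C·N^α, where C = λ/√(τ² + 2λδ²) and α = −1 + τ/δ² − √(τ² + 2λδ²)/δ². (This is Theorem 2 of the paper: mixing the lognormal densities of the group behavior, with log-mean τt and log-variance δ²t, over an exponentially weighted observation time window with rate λ yields a power law P(N_z) = C·N_z^α.) -/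
open Real MeasureTheory Set


lemma aux_deriv {β c : ℝ} {s : ℝ} (hs : s ∈ Set.Ioi (0:ℝ)) :
    HasDerivWithinAt (fun s : ℝ => β * s - c / s) (β + c / s ^ 2) (Set.Ioi 0) s := by
  have h1 : HasDerivAt (fun s : ℝ => β * s - c / s) (β - c * (-(s^2)⁻¹)) s := by
    have := ((hasDerivAt_inv (ne_of_gt (mem_Ioi.mp hs))).const_mul c)
    have h := ((hasDerivAt_id' s).const_mul β).sub this
    rw [mul_one] at h
    exact h
  have h2 : β - c * (-(s^2)⁻¹) = β + c / s ^ 2 := by ring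
  rw [h2] at h1
  exact h1.hasDerivWithinAt

lemma aux_inj {β c : ℝ} (hβ : 0 < β) (hc : 0 ≤ c) :
    Set.InjOn (fun s : ℝ => β * s - c / s) (Set.Ioi 0) := by
  have h : StrictMonoOn (fun s : ℝ => β * s - c / s) (Set.Ioi 0) := by
    intro x hx y hy hxy
    simp only [mem_Ioi] at hx hy
    have h1 : β * x < β * y := (mul_lt_mul_iff_right₀ hβ).mpr hxy
    have h2 : c / y ≤ c / x := div_le_div_of_nonneg_left hc hx hxy.le
    simp only; linarith
  exact h.injOn

lemma aux_surj {β c : ℝ} (hβ : 0 < β) (hc : 0 < c) :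
    (fun s : ℝ => β * s - c / s) '' Set.Ioi 0 = Set.univ := by
  apply Set.eq_univ_of_forall
  intro u
  have hD2 : 0 ≤ u ^ 2 + 4 * β * c := by positivity
  set D := Real.sqrt (u ^ 2 + 4 * β * c) with hD
  have hDsq : D ^ 2 = u ^ 2 + 4 * β * c := Real.sq_sqrt hD2
  have hDgt : -u < D := by
    nlinarith [Real.sqrt_nonneg (u ^ 2 + 4 * β * c), hDsq, mul_pos hβ hc]
  have hu : 0 < u + D := by linarith
  refine ⟨(u + D) / (2 * β), ?_, ?_⟩
  · simp only [mem_Ioi]; positivity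
  · have hu' : u + D ≠ 0 := ne_of_gt hu
    field_simp
    nlinarith [hDsq]

lemma aux_L1 {β c : ℝ} (hβ : 0 < β) (hc : 0 < c) :
    ∫ s in Set.Ioi (0:ℝ), (β + c / s ^ 2) * Real.exp (-(β * s - c / s) ^ 2)
      = Real.sqrt π := by
  have key := integral_image_eq_integral_abs_deriv_smul measurableSet_Ioi
    (fun s hs => aux_deriv (β := β) (c := c) hs) (aux_inj hβ hc.le)
    (fun u => Real.exp (-u ^ 2))
  rw [aux_surj hβ hc] at key
  have hg : ∫ x in (Set.univ : Set ℝ), Real.exp (-x ^ 2) = Real.sqrt π := by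
    rw [MeasureTheory.setIntegral_univ]
    simpa using integral_gaussian 1
  rw [← hg, key]
  refine setIntegral_congr_fun measurableSet_Ioi (fun s hs => ?_)
  have hs0 : (0:ℝ) < s := hs
  have : |β + c / s ^ 2| = β + c / s ^ 2 := abs_of_pos (by positivity)
  simp [this, smul_eq_mul]

lemma aux_L2 {β c : ℝ} (hβ : 0 < β) (hc : 0 < c) :
    ∫ s in Set.Ioi (0:ℝ), (c / s ^ 2) * Real.exp (-(β * s - c / s) ^ 2)
      = ∫ s in Set.Ioi (0:ℝ), β * Real.exp (-(β * s - c / s) ^ 2) := by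
  set k := c / β with hk
  have hkpos : 0 < k := div_pos hc hβ
  -- substitution φ s = k / s
  have hderiv : ∀ s ∈ Set.Ioi (0:ℝ),
      HasDerivWithinAt (fun s : ℝ => k / s) (-(k / s ^ 2)) (Set.Ioi 0) s := by
    intro s hs
    have h1 := (hasDerivAt_inv (ne_of_gt (mem_Ioi.mp hs))).const_mul k
    have h2 : k * (-(s^2)⁻¹) = -(k / s ^ 2) := by ring
    rw [h2] at h1
    exact h1.hasDerivWithinAt
  have hinj : Set.InjOn (fun s : ℝ => k / s) (Set.Ioi 0) := by
    intro x hx y hy hxy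
    simp only at hxy
    have hx0 : (0:ℝ) < x := hx
    have hy0 : (0:ℝ) < y := hy
    field_simp at hxy
    linarith
  have himg : (fun s : ℝ => k / s) '' Set.Ioi 0 = Set.Ioi 0 := by
    ext x
    constructor
    · rintro ⟨y, hy, rfl⟩
      exact div_pos hkpos hy
    · intro hx
      exact ⟨k / x, div_pos hkpos hx, by field_simp⟩
  have key := integral_image_eq_integral_abs_deriv_smul measurableSet_Ioi hderiv hinj
    (fun s => β * Real.exp (-(β * s - c / s) ^ 2))
  rw [himg] at key
  rw [key]
  refine setIntegral_congr_fun measurableSet_Ioi (fun s hs => ?_)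
  have hs0 : (0:ℝ) < s := hs
  have habs : |(-(k / s ^ 2))| = k / s ^ 2 := by
    rw [abs_neg]; exact abs_of_pos (by positivity)
  have harg : β * (k / s) - c / (k / s) = -(β * s - c / s) := by
    rw [hk]; field_simp; ring
  simp only [smul_eq_mul, habs, harg, neg_sq]
  rw [hk]; field_simp
lemma aux_cont {β c : ℝ} :
    ContinuousOn (fun s : ℝ => Real.exp (-(β * s - c / s) ^ 2)) (Set.Ioi 0) := by
  apply Real.continuous_exp.comp_continuousOn
  apply ContinuousOn.neg
  apply ContinuousOn.pow
  exact (continuousOn_const.mul continuousOn_id).sub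
    (continuousOn_const.div continuousOn_id (fun x hx => ne_of_gt hx))

lemma aux_fval {β c s : ℝ} (hs : (0:ℝ) < s) :
    Real.exp (-(β * s - c / s) ^ 2)
      = Real.exp (2 * β * c) * Real.exp (-(β ^ 2) * s ^ 2) * Real.exp (-(c ^ 2 / s ^ 2)) := by
  rw [← Real.exp_add, ← Real.exp_add]
  congr 1
  field_simp
  ring

lemma aux_int1 {β c : ℝ} (hβ : 0 < β) (hc : 0 < c) :
    IntegrableOn (fun s : ℝ => β * Real.exp (-(β * s - c / s) ^ 2)) (Set.Ioi 0) := by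
  have hint : Integrable (fun s : ℝ => (β * Real.exp (2 * β * c)) * Real.exp (-(β ^ 2) * s ^ 2)) :=
    (integrable_exp_neg_mul_sq (by positivity : (0:ℝ) < β ^ 2)).const_mul _
  apply Integrable.mono' hint.integrableOn
    ((continuousOn_const.mul aux_cont).aestronglyMeasurable measurableSet_Ioi)
  filter_upwards [ae_restrict_mem measurableSet_Ioi] with s hs
  have hs0 : (0:ℝ) < s := hs
  simp only [Pi.mul_apply]
  rw [Real.norm_eq_abs, abs_of_pos (by positivity)]
  rw [aux_fval hs0]
  have h1 : Real.exp (-(c ^ 2 / s ^ 2)) ≤ 1 :=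
    Real.exp_le_one_iff.mpr (neg_nonpos.mpr (by positivity))
  have h2 : (0:ℝ) ≤ β * (Real.exp (2 * β * c) * Real.exp (-(β ^ 2) * s ^ 2)) := by positivity
  calc β * (Real.exp (2 * β * c) * Real.exp (-(β ^ 2) * s ^ 2) * Real.exp (-(c ^ 2 / s ^ 2)))
      = (β * (Real.exp (2 * β * c) * Real.exp (-(β ^ 2) * s ^ 2))) * Real.exp (-(c ^ 2 / s ^ 2)) := by
        ring
    _ ≤ (β * (Real.exp (2 * β * c) * Real.exp (-(β ^ 2) * s ^ 2))) * 1 :=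
        mul_le_mul_of_nonneg_left h1 h2
    _ = β * Real.exp (2 * β * c) * Real.exp (-(β ^ 2) * s ^ 2) := by ring

lemma aux_int2 {β c : ℝ} (hβ : 0 < β) (hc : 0 < c) :
    IntegrableOn (fun s : ℝ => (c / s ^ 2) * Real.exp (-(β * s - c / s) ^ 2)) (Set.Ioi 0) := by
  have hint : Integrable
      (fun s : ℝ => ((1 / c) * Real.exp (2 * β * c)) * Real.exp (-(β ^ 2) * s ^ 2)) :=
    (integrable_exp_neg_mul_sq (by positivity : (0:ℝ) < β ^ 2)).const_mul _
  have hcont : ContinuousOn (fun s : ℝ => (c / s ^ 2)) (Set.Ioi 0) :=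
    continuousOn_const.div (continuousOn_pow 2) (fun x hx => pow_ne_zero 2 (ne_of_gt hx))
  apply Integrable.mono' hint.integrableOn
    ((hcont.mul aux_cont).aestronglyMeasurable measurableSet_Ioi)
  filter_upwards [ae_restrict_mem measurableSet_Ioi] with s hs
  have hs0 : (0:ℝ) < s := hs
  simp only [Pi.mul_apply]
  rw [Real.norm_eq_abs, abs_of_pos (by positivity)]
  rw [aux_fval hs0]
  have hx : c ^ 2 / s ^ 2 * Real.exp (-(c ^ 2 / s ^ 2)) ≤ 1 := by
    set x := c ^ 2 / s ^ 2 with hxdef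
    have hx0 : (0:ℝ) ≤ x := by positivity
    calc x * Real.exp (-x) ≤ Real.exp x * Real.exp (-x) := by
          apply mul_le_mul_of_nonneg_right _ (Real.exp_pos _).le
          linarith [Real.add_one_le_exp x]
      _ = 1 := by rw [← Real.exp_add]; simp
  have hkey : c / s ^ 2 * Real.exp (-(c ^ 2 / s ^ 2)) ≤ 1 / c := by
    calc c / s ^ 2 * Real.exp (-(c ^ 2 / s ^ 2))
        = (1 / c) * (c ^ 2 / s ^ 2 * Real.exp (-(c ^ 2 / s ^ 2))) := by
          field_simp
      _ ≤ (1 / c) * 1 := mul_le_mul_of_nonneg_left hx (by positivity)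
      _ = 1 / c := mul_one _
  have h2 : (0:ℝ) < Real.exp (2 * β * c) * Real.exp (-(β ^ 2) * s ^ 2) := by positivity
  calc c / s ^ 2 * (Real.exp (2 * β * c) * Real.exp (-(β ^ 2) * s ^ 2)
          * Real.exp (-(c ^ 2 / s ^ 2)))
      = (c / s ^ 2 * Real.exp (-(c ^ 2 / s ^ 2)))
          * (Real.exp (2 * β * c) * Real.exp (-(β ^ 2) * s ^ 2)) := by ring
    _ ≤ (1 / c) * (Real.exp (2 * β * c) * Real.exp (-(β ^ 2) * s ^ 2)) :=
        mul_le_mul_of_nonneg_right hkey h2.le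
    _ = 1 / c * Real.exp (2 * β * c) * Real.exp (-(β ^ 2) * s ^ 2) := by ring

lemma aux_L3 {β c : ℝ} (hβ : 0 < β) (hc : 0 ≤ c) :
    ∫ s in Set.Ioi (0:ℝ), Real.exp (-(β ^ 2 * s ^ 2 + c ^ 2 / s ^ 2))
      = Real.sqrt π / (2 * β) * Real.exp (-(2 * β * c)) := by
  rcases eq_or_lt_of_le hc with hc0 | hc0
  · -- c = 0
    subst hc0
    have : ∫ s in Set.Ioi (0:ℝ), Real.exp (-(β ^ 2 * s ^ 2 + 0 ^ 2 / s ^ 2))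
        = ∫ s in Set.Ioi (0:ℝ), Real.exp (-(β ^ 2) * s ^ 2) := by
      refine setIntegral_congr_fun measurableSet_Ioi (fun s hs => ?_)
      norm_num
    rw [this, integral_gaussian_Ioi]
    have hsq : Real.sqrt (π / β ^ 2) = Real.sqrt π / β := by
      rw [Real.sqrt_div Real.pi_pos.le, Real.sqrt_sq hβ.le]
    rw [hsq]
    simp [Real.exp_zero]
    ring
  · -- c > 0
    have heq : ∫ s in Set.Ioi (0:ℝ), Real.exp (-(β ^ 2 * s ^ 2 + c ^ 2 / s ^ 2))
        = Real.exp (-(2 * β * c)) * ∫ s in Set.Ioi (0:ℝ), Real.exp (-(β * s - c / s) ^ 2) := by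
      rw [← MeasureTheory.integral_const_mul]
      refine setIntegral_congr_fun measurableSet_Ioi (fun s hs => ?_)
      have hs0 : (0:ℝ) < s := hs
      rw [← Real.exp_add]
      congr 1
      field_simp
      ring
    rw [heq]
    have hI : ∫ s in Set.Ioi (0:ℝ), Real.exp (-(β * s - c / s) ^ 2)
        = Real.sqrt π / (2 * β) := by
      have hsplit : ∫ s in Set.Ioi (0:ℝ), (β + c / s ^ 2) * Real.exp (-(β * s - c / s) ^ 2)
          = (∫ s in Set.Ioi (0:ℝ), β * Real.exp (-(β * s - c / s) ^ 2))
            + ∫ s in Set.Ioi (0:ℝ), (c / s ^ 2) * Real.exp (-(β * s - c / s) ^ 2) := by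
        rw [← MeasureTheory.integral_add (aux_int1 hβ hc0) (aux_int2 hβ hc0)]
        refine setIntegral_congr_fun measurableSet_Ioi (fun s hs => ?_)
        ring
      rw [aux_L1 hβ hc0, aux_L2 hβ hc0, integral_const_mul] at hsplit
      have : Real.sqrt π = 2 * β * ∫ s in Set.Ioi (0:ℝ), Real.exp (-(β * s - c / s) ^ 2) := by
        rw [hsplit]; ring
      rw [this]; field_simp
    rw [hI]; ring
lemma aux_L4 (q p : ℝ) :
    ∫ t in Set.Ioi (0:ℝ), (1 / Real.sqrt t) * Real.exp (-(q * t + p / t))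
      = 2 * ∫ s in Set.Ioi (0:ℝ), Real.exp (-(q * s ^ 2 + p / s ^ 2)) := by
  have key := integral_comp_rpow_Ioi_of_pos
    (g := fun t => (1 / Real.sqrt t) * Real.exp (-(q * t + p / t))) (p := 2) two_pos
  rw [← key, ← integral_const_mul]
  refine setIntegral_congr_fun measurableSet_Ioi (fun x hx => ?_)
  have hx0 : (0:ℝ) < x := hx
  have h2 : x ^ (2:ℝ) = x ^ 2 := by
    rw [show (2:ℝ) = ((2:ℕ):ℝ) by norm_num, Real.rpow_natCast]
  simp only [smul_eq_mul, h2, show (2:ℝ) - 1 = 1 by norm_num, Real.rpow_one,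
    Real.sqrt_sq hx0.le]
  field_simp
/-- **Theorem 2 of the paper.** Mixing the lognormal densities of group
behavior (log-mean `τ·t`, log-variance `δ²·t`) over an exponentially distributed observation
window with rate `λ` yields a power law: for `τ ≥ 0`, `δ > 0`, `λ > 0` and `N ≥ 1`,
`∫_0^∞ λ·e^{-λt} · (1/(N·δ·√(2πt))) · exp (-(ln N - τt)²/(2δ²t)) dt = C · N^α`, where
`C = λ/√(τ² + 2λδ²)` and `α = -1 + τ/δ² - √(τ² + 2λδ²)/δ²`. -/
theorem stmt_8 (τ δ lam N : ℝ) (hτ : 0 ≤ τ) (hδ : 0 < δ) (hlam : 0 < lam) (hN : 1 ≤ N) :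
    ∫ t in Set.Ioi (0 : ℝ),
        lam * Real.exp (-lam * t)
          * (1 / (N * δ * Real.sqrt (2 * Real.pi * t)))
          * Real.exp (-(Real.log N - τ * t) ^ 2 / (2 * δ ^ 2 * t)) =
      (lam / Real.sqrt (τ ^ 2 + 2 * lam * δ ^ 2))
        * N ^ (-1 + τ / δ ^ 2 - Real.sqrt (τ ^ 2 + 2 * lam * δ ^ 2) / δ ^ 2) := by
  have hN0 : (0:ℝ) < N := lt_of_lt_of_le one_pos hN
  have hlog : (0:ℝ) ≤ Real.log N := Real.log_nonneg hN
  have hS : (0:ℝ) < τ ^ 2 + 2 * lam * δ ^ 2 := by positivity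
  set S : ℝ := τ ^ 2 + 2 * lam * δ ^ 2 with hSdef
  have hsqS : (0:ℝ) < Real.sqrt S := Real.sqrt_pos.mpr hS
  have hs2 : Real.sqrt 2 * Real.sqrt 2 = 2 := Real.mul_self_sqrt (by norm_num)
  have hs2pos : (0:ℝ) < Real.sqrt 2 := Real.sqrt_pos.mpr (by norm_num)
  have hsπ : (0:ℝ) < Real.sqrt π := Real.sqrt_pos.mpr Real.pi_pos
  set β : ℝ := Real.sqrt S / (Real.sqrt 2 * δ) with hβdef
  set c : ℝ := Real.log N / (Real.sqrt 2 * δ) with hcdef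
  have hβ : 0 < β := by rw [hβdef]; positivity
  have hc : 0 ≤ c := by rw [hcdef]; positivity
  have hSsq : Real.sqrt S ^ 2 = S := Real.sq_sqrt hS.le
  have hbsq : β ^ 2 = S / (2 * δ ^ 2) := by
    rw [hβdef, div_pow, mul_pow, hSsq]
    rw [show Real.sqrt 2 ^ 2 = 2 by rw [sq]; exact hs2]
  have hcsq : c ^ 2 = Real.log N ^ 2 / (2 * δ ^ 2) := by
    rw [hcdef, div_pow, mul_pow]
    rw [show Real.sqrt 2 ^ 2 = 2 by rw [sq]; exact hs2]
  -- Step 1: rewrite the integrand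
  have hstep : ∫ t in Set.Ioi (0 : ℝ),
        lam * Real.exp (-lam * t)
          * (1 / (N * δ * Real.sqrt (2 * Real.pi * t)))
          * Real.exp (-(Real.log N - τ * t) ^ 2 / (2 * δ ^ 2 * t))
      = (lam / (N * δ * Real.sqrt (2 * Real.pi)) * Real.exp (τ * Real.log N / δ ^ 2))
        * ∫ t in Set.Ioi (0:ℝ), (1 / Real.sqrt t) * Real.exp (-(β ^ 2 * t + c ^ 2 / t)) := by
    rw [← integral_const_mul]
    refine setIntegral_congr_fun measurableSet_Ioi (fun t ht => ?_)
    have ht0 : (0:ℝ) < t := ht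
    have hexp : Real.exp (-lam * t) * Real.exp (-(Real.log N - τ * t) ^ 2 / (2 * δ ^ 2 * t))
        = Real.exp (τ * Real.log N / δ ^ 2) * Real.exp (-(β ^ 2 * t + c ^ 2 / t)) := by
      rw [← Real.exp_add, ← Real.exp_add]
      congr 1
      rw [hbsq, hcsq]
      field_simp
      ring
    rw [Real.sqrt_mul (by positivity : (0:ℝ) ≤ 2 * Real.pi) t]
    have hst : (0:ℝ) < Real.sqrt t := Real.sqrt_pos.mpr ht0
    have hs2π : (0:ℝ) < Real.sqrt (2 * Real.pi) := Real.sqrt_pos.mpr (by positivity)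
    linear_combination (lam / (N * δ * Real.sqrt (2 * Real.pi) * Real.sqrt t)) * hexp
  rw [hstep, aux_L4, aux_L3 hβ hc]
  -- Step 2: final algebra
  have e2 : N ^ (-(Real.sqrt S / δ ^ 2)) = Real.exp (-(2 * β * c)) := by
    rw [Real.rpow_def_of_pos hN0]
    congr 1
    rw [hβdef, hcdef]
    field_simp
    linear_combination (-Real.log N) * hs2
  have e1 : N ^ (τ / δ ^ 2) = Real.exp (τ * Real.log N / δ ^ 2) := by
    rw [Real.rpow_def_of_pos hN0]
    congr 1
    ring
  have hrpow : N ^ (-1 + τ / δ ^ 2 - Real.sqrt S / δ ^ 2)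
      = (1 / N) * (Real.exp (τ * Real.log N / δ ^ 2) * Real.exp (-(2 * β * c))) := by
    rw [show (-1 + τ / δ ^ 2 - Real.sqrt S / δ ^ 2)
        = (-1:ℝ) + (τ / δ ^ 2 + (-(Real.sqrt S / δ ^ 2))) by ring,
      Real.rpow_add hN0, Real.rpow_add hN0, Real.rpow_neg_one, e1, e2]
    ring
  rw [hrpow]
  have hsqrt2π : Real.sqrt (2 * Real.pi) = Real.sqrt 2 * Real.sqrt π :=
    Real.sqrt_mul (by norm_num) _
  rw [hsqrt2π, hβdef]
  field_simp
end
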